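/- arXiv:2009.08209 — 3 statements merged into one kernel-verified Lean document; each statement's English description precedes it below -/
import Mathlib

section
/- Let V ↪ H ↪ V* be a Gelfand triple with V a reflexive separable Banach space, and let B : V → V* be monotone with the strong monotonicity property ⟨B(x₁) − B(x₂), x₁ − x₂⟩ ≥ c_B ‖x₁ − x₂‖_V^p for some c_B > 0 and p ≥ 2. Then for every λ > 0 the resolvent J_λ = (I + λB)⁻¹ : V* → V is (1/(p−1))-Hölder continuous: ‖J_λ(x₁) − J_λ(x₂)‖_V ≤ (λ c_B)^{−1/(p−1)} ‖x₁ − x₂‖_{V*}^{1/(p−1)} for all x₁, x₂ ∈ V*. -/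
/-- In a Gelfand triple `V ↪ H ↪ V*`, if `B : V → V*` is strongly
monotone with exponent `p ≥ 2` and constant `c_B > 0`, then the resolvent
`J_λ = (I + λB)⁻¹ : V* → V` is `(1/(p-1))`-Hölder continuous with constant
`(λ c_B)^(-1/(p-1))`. -/
theorem resolvent_holder_continuous
    {V : Type*} [NormedAddCommGroup V] [NormedSpace ℝ V]
    (ι : V →L[ℝ] StrongDual ℝ V)  -- the embedding V ↪ H ↪ V*
    (hι : ∀ u : V, 0 ≤ ι u u)           -- ⟨ι u, u⟩ = ‖u‖_H² ≥ 0
    (B : V → StrongDual ℝ V)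
    (cB p : ℝ) (hcB : 0 < cB) (hp : 2 ≤ p)
    (hmono : ∀ x₁ x₂ : V, cB * ‖x₁ - x₂‖ ^ p ≤ (B x₁ - B x₂) (x₁ - x₂))
    (lam : ℝ) (hlam : 0 < lam)
    (J : StrongDual ℝ V → V)
    (hJ : ∀ x : StrongDual ℝ V, ι (J x) + lam • B (J x) = x) :
    ∀ x₁ x₂ : StrongDual ℝ V,
      ‖J x₁ - J x₂‖ ≤ (lam * cB) ^ (-(1 / (p - 1))) * ‖x₁ - x₂‖ ^ (1 / (p - 1)) := by
  intro x₁ x₂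
  set d : V := J x₁ - J x₂ with hd
  have hp1 : (0:ℝ) < p - 1 := by linarith
  have hq : (0:ℝ) < 1 / (p - 1) := by positivity
  -- key inequality: lam * cB * ‖d‖^p ≤ ‖x₁ - x₂‖ * ‖d‖
  have hsub : x₁ - x₂ = ι d + lam • (B (J x₁) - B (J x₂)) := by
    have e : x₁ - x₂ = (ι (J x₁) + lam • B (J x₁)) - (ι (J x₂) + lam • B (J x₂)) := by
      rw [hJ x₁, hJ x₂]
    rw [e, hd]
    simp [smul_sub]
    abel
  have happ : (x₁ - x₂) d = ι d d + lam * ((B (J x₁) - B (J x₂)) d) := by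
    rw [hsub]; simp
  have hmono' := hmono (J x₁) (J x₂)
  have hineq : lam * (cB * ‖d‖ ^ p) ≤ (x₁ - x₂) d := by
    rw [happ]
    have h1 : lam * (cB * ‖d‖ ^ p) ≤ lam * ((B (J x₁) - B (J x₂)) d) :=
      mul_le_mul_of_nonneg_left hmono' hlam.le
    have := hι d
    linarith
  have hbound : (x₁ - x₂) d ≤ ‖x₁ - x₂‖ * ‖d‖ := by
    calc (x₁ - x₂) d ≤ ‖(x₁ - x₂) d‖ := le_abs_self _
      _ ≤ ‖x₁ - x₂‖ * ‖d‖ := (x₁ - x₂).le_opNorm d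
  have key : lam * cB * ‖d‖ ^ p ≤ ‖x₁ - x₂‖ * ‖d‖ := by
    calc lam * cB * ‖d‖ ^ p = lam * (cB * ‖d‖ ^ p) := by ring
      _ ≤ (x₁ - x₂) d := hineq
      _ ≤ ‖x₁ - x₂‖ * ‖d‖ := hbound
  rcases eq_or_lt_of_le (norm_nonneg d) with h0 | h0
  · rw [← h0]
    positivity
  -- divide by ‖d‖
  have hsplit : ‖d‖ ^ p = ‖d‖ ^ (p - 1) * ‖d‖ := by
    rw [← Real.rpow_add_one h0.ne', sub_add_cancel]
  have key2 : lam * cB * ‖d‖ ^ (p - 1) ≤ ‖x₁ - x₂‖ := by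
    have := key
    rw [hsplit, ← mul_assoc] at this
    exact le_of_mul_le_mul_right this h0
  have key3 : ‖d‖ ^ (p - 1) ≤ ‖x₁ - x₂‖ / (lam * cB) := by
    rw [le_div_iff₀ (by positivity)]
    linarith [key2]
  have key4 : (‖d‖ ^ (p - 1)) ^ (1 / (p - 1)) ≤ (‖x₁ - x₂‖ / (lam * cB)) ^ (1 / (p - 1)) :=
    Real.rpow_le_rpow (by positivity) key3 hq.le
  have hl : (‖d‖ ^ (p - 1)) ^ (1 / (p - 1)) = ‖d‖ := by
    rw [← Real.rpow_mul h0.le, mul_one_div, div_self hp1.ne', Real.rpow_one]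
  have hr : (‖x₁ - x₂‖ / (lam * cB)) ^ (1 / (p - 1))
      = (lam * cB) ^ (-(1 / (p - 1))) * ‖x₁ - x₂‖ ^ (1 / (p - 1)) := by
    rw [Real.div_rpow (norm_nonneg _) (by positivity), Real.rpow_neg (by positivity)]
    ring
  rw [← hl, ← hr]
  exact key4
end

section
/- Let x ∈ V and suppose B : V → V* satisfies B(0)=0, strong monotonicity with constants c_B > 0, p ≥ 2, and ‖B(y)‖_{V*} ≤ C_B(1 + ‖y‖_V^{p−1}) for y ∈ V. Then for every λ > 0, (c_B/p) ‖J_λ(x)‖_V^p + λ ‖B(J_λ(x))‖_H² ≤ C_B ‖x‖_V + (1/p) C_B^p c_B^{1−p} ‖x‖_V^p; in particular ‖J_λ(x)‖_V ≤ M(1 + ‖x‖_V) for a constant M independent of λ. -/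
open scoped RealInnerProductSpace

private lemma real_rpow_add_le_add_rpow {a b z : ℝ} (ha : 0 ≤ a) (hb : 0 ≤ b)
    (hz : 0 ≤ z) (hz1 : z ≤ 1) : (a + b) ^ z ≤ a ^ z + b ^ z := by
  have h := NNReal.rpow_add_le_add_rpow ⟨a, ha⟩ ⟨b, hb⟩ hz hz1
  have h2 := NNReal.coe_le_coe.2 h
  simpa [NNReal.coe_rpow, show ((⟨a, ha⟩ + ⟨b, hb⟩ : NNReal) : ℝ) = a + b from rfl,
    show ((⟨a, ha⟩ ^ z : NNReal) : ℝ) = a ^ z from rfl,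
    show ((⟨b, hb⟩ ^ z : NNReal) : ℝ) = b ^ z from rfl] using h2

private lemma rpow_le_one_add_self {a z : ℝ} (ha : 0 ≤ a) (hz : 0 ≤ z) (hz1 : z ≤ 1) :
    a ^ z ≤ 1 + a := by
  rcases le_total a 1 with h | h
  · have := Real.rpow_le_one ha h hz
    linarith
  · have := Real.rpow_le_rpow_of_exponent_le h hz1
    rw [Real.rpow_one] at this
    linarith

/-- For `x ∈ V`, `(c_B/p)‖J_λ x‖_V^p + λ‖B(J_λ x)‖_H² ≤
C_B‖x‖_V + (1/p) C_B^p c_B^{1-p} ‖x‖_V^p`; in particular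
`‖J_λ x‖_V ≤ M (1 + ‖x‖_V)` with `M` independent of `λ`. -/
theorem resolvent_uniform_V_bound
    {V H : Type*} [NormedAddCommGroup V] [NormedSpace ℝ V]
    [NormedAddCommGroup H] [InnerProductSpace ℝ H] [CompleteSpace H]
    (ι : V →L[ℝ] H)                 -- embedding V ↪ H
    (B : V → H)                     -- B(J_λ x) ∈ H when x ∈ V
    (cB CB p : ℝ) (hcB : 0 < cB) (hCB : 0 < CB) (hp : 2 ≤ p)
    (hB0 : B 0 = 0)
    (hmono : ∀ x₁ x₂ : V, cB * ‖x₁ - x₂‖ ^ p ≤ ⟪B x₁ - B x₂, ι x₁ - ι x₂⟫)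
    (hgrowth : ∀ y z : V, ⟪B y, ι z⟫ ≤ CB * (1 + ‖y‖ ^ (p - 1)) * ‖z‖)
    (J : ℝ → H → V)
    (hJ : ∀ lam > (0:ℝ), ∀ x : H, ι (J lam x) + lam • B (J lam x) = x) :
    (∀ lam > (0:ℝ), ∀ x : V,
      cB / p * ‖J lam (ι x)‖ ^ p + lam * ‖B (J lam (ι x))‖ ^ 2
        ≤ CB * ‖x‖ + (1 / p) * CB ^ p * cB ^ (1 - p) * ‖x‖ ^ p) ∧
    ∃ M > (0:ℝ), ∀ lam > (0:ℝ), ∀ x : V, ‖J lam (ι x)‖ ≤ M * (1 + ‖x‖) := by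
  have hp0 : (0:ℝ) < p := by linarith
  have hp1 : (1:ℝ) < p := by linarith
  have hpm1 : (0:ℝ) < p - 1 := by linarith
  have key : ∀ lam > (0:ℝ), ∀ x : V,
      cB / p * ‖J lam (ι x)‖ ^ p + lam * ‖B (J lam (ι x))‖ ^ 2
        ≤ CB * ‖x‖ + (1 / p) * CB ^ p * cB ^ (1 - p) * ‖x‖ ^ p := by
    intro lam hlam x
    set u := J lam (ι x) with hu
    set b := B u with hb
    have hres := hJ lam hlam (ι x)
    have hinner : ⟪b, ι u⟫ + lam * ‖b‖ ^ 2 = ⟪b, ι x⟫ := by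
      have h := congrArg (fun y => ⟪b, y⟫) hres
      simpa [inner_add_right, real_inner_smul_right, ← hu, ← hb, real_inner_self_eq_norm_sq] using h
    have hmono0 : cB * ‖u‖ ^ p ≤ ⟪b, ι u⟫ := by
      have h := hmono u 0
      simpa [hB0, map_zero] using h
    have hgr : ⟪b, ι x⟫ ≤ CB * ‖x‖ + CB * ‖u‖ ^ (p - 1) * ‖x‖ := by
      have h := hgrowth u x
      nlinarith [h]
    -- Young's inequality with conjugate exponents p and q = p/(p-1)
    have hq : p.HolderConjugate (p / (p - 1)) := Real.HolderConjugate.conjExponent hp1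
    set q : ℝ := p / (p - 1) with hqdef
    have hA : (0:ℝ) ≤ CB * cB ^ ((1 - p) / p) * ‖x‖ :=
      mul_nonneg (mul_nonneg hCB.le (Real.rpow_nonneg hcB.le _)) (norm_nonneg _)
    have hBv : (0:ℝ) ≤ cB ^ ((p - 1) / p) * ‖u‖ ^ (p - 1) :=
      mul_nonneg (Real.rpow_nonneg hcB.le _) (Real.rpow_nonneg (norm_nonneg _) _)
    have hyoung := Real.young_inequality_of_nonneg hA hBv hq
    -- identify the three pieces
    have hprod : (CB * cB ^ ((1 - p) / p) * ‖x‖) * (cB ^ ((p - 1) / p) * ‖u‖ ^ (p - 1))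
        = CB * ‖u‖ ^ (p - 1) * ‖x‖ := by
      have : cB ^ ((1 - p) / p) * cB ^ ((p - 1) / p) = 1 := by
        rw [← Real.rpow_add hcB, show (1 - p) / p + (p - 1) / p = (0:ℝ) by ring,
          Real.rpow_zero]
      calc (CB * cB ^ ((1 - p) / p) * ‖x‖) * (cB ^ ((p - 1) / p) * ‖u‖ ^ (p - 1))
          = CB * (cB ^ ((1 - p) / p) * cB ^ ((p - 1) / p)) * ‖u‖ ^ (p - 1) * ‖x‖ := by ring
        _ = CB * ‖u‖ ^ (p - 1) * ‖x‖ := by rw [this]; ring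
    have hApow : (CB * cB ^ ((1 - p) / p) * ‖x‖) ^ p
        = CB ^ p * cB ^ (1 - p) * ‖x‖ ^ p := by
      rw [Real.mul_rpow (mul_nonneg hCB.le (Real.rpow_nonneg hcB.le _)) (norm_nonneg _),
        Real.mul_rpow hCB.le (Real.rpow_nonneg hcB.le _),
        ← Real.rpow_mul hcB.le, div_mul_cancel₀ _ hp0.ne']
    have hBpow : (cB ^ ((p - 1) / p) * ‖u‖ ^ (p - 1)) ^ q = cB * ‖u‖ ^ p := by
      rw [Real.mul_rpow (Real.rpow_nonneg hcB.le _) (Real.rpow_nonneg (norm_nonneg _) _),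
        ← Real.rpow_mul hcB.le, ← Real.rpow_mul (norm_nonneg _)]
      have h1 : (p - 1) / p * q = 1 := by
        rw [hqdef]; field_simp
      have h2 : (p - 1) * q = p := by
        rw [hqdef]; field_simp
      rw [h1, h2, Real.rpow_one]
    rw [hprod, hApow, hBpow] at hyoung
    have hqval : (cB * ‖u‖ ^ p) / q = (p - 1) / p * (cB * ‖u‖ ^ p) := by
      rw [hqdef]; field_simp
    rw [hqval] at hyoung
    have hsplit : (p - 1) / p * (cB * ‖u‖ ^ p) + cB / p * ‖u‖ ^ p = cB * ‖u‖ ^ p := by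
      field_simp; ring
    have hdiv : CB ^ p * cB ^ (1 - p) * ‖x‖ ^ p / p
        = 1 / p * CB ^ p * cB ^ (1 - p) * ‖x‖ ^ p := by ring
    rw [hdiv] at hyoung
    linarith
  refine ⟨key, ?_⟩
  -- second part
  refine ⟨(p * CB / cB) ^ (1 / p) + CB / cB, ?_, ?_⟩
  · have h1 : (0:ℝ) < (p * CB / cB) ^ (1 / p) :=
      Real.rpow_pos_of_pos (by positivity) _
    have h2 : (0:ℝ) < CB / cB := by positivity
    linarith
  intro lam hlam x
  set u := J lam (ι x) with hu
  have hk := key lam hlam x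
  have hnn : 0 ≤ lam * ‖B u‖ ^ 2 := by positivity
  have h1 : cB / p * ‖u‖ ^ p ≤ CB * ‖x‖ + 1 / p * CB ^ p * cB ^ (1 - p) * ‖x‖ ^ p := by
    linarith
  have hup : ‖u‖ ^ p ≤ p * CB / cB * ‖x‖ + (CB / cB) ^ p * ‖x‖ ^ p := by
    have hcbp : (CB / cB) ^ p = CB ^ p * cB ^ (1 - p) / cB := by
      rw [Real.div_rpow hCB.le hcB.le]
      rw [Real.rpow_sub hcB, Real.rpow_one]
      field_simp
    have h2 : ‖u‖ ^ p ≤ p / cB * (CB * ‖x‖ + 1 / p * CB ^ p * cB ^ (1 - p) * ‖x‖ ^ p) := by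
      have h3 := mul_le_mul_of_nonneg_left h1 (by positivity : (0:ℝ) ≤ p / cB)
      have h4 : p / cB * (cB / p * ‖u‖ ^ p) = ‖u‖ ^ p := by
        field_simp
      linarith [h3, h4.ge, h4.le]
    have h5 : p / cB * (CB * ‖x‖ + 1 / p * CB ^ p * cB ^ (1 - p) * ‖x‖ ^ p)
        = p * CB / cB * ‖x‖ + (CB / cB) ^ p * ‖x‖ ^ p := by
      rw [hcbp]; field_simp
    linarith [h2, h5.le, h5.ge]
  -- take p-th roots
  have hinvp0 : (0:ℝ) ≤ 1 / p := by positivity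
  have hinvp1 : 1 / p ≤ 1 := by
    rw [div_le_one hp0]; linarith
  have hA0 : (0:ℝ) ≤ p * CB / cB * ‖x‖ := by positivity
  have hB0' : (0:ℝ) ≤ (CB / cB) ^ p * ‖x‖ ^ p := by positivity
  have hroot : ‖u‖ ≤ (p * CB / cB * ‖x‖ + (CB / cB) ^ p * ‖x‖ ^ p) ^ (1 / p) := by
    have h6 : (‖u‖ ^ p) ^ (1 / p) = ‖u‖ := by
      rw [← Real.rpow_mul (norm_nonneg _), mul_one_div_cancel hp0.ne', Real.rpow_one]
    calc ‖u‖ = (‖u‖ ^ p) ^ (1 / p) := h6.symm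
      _ ≤ _ := Real.rpow_le_rpow (Real.rpow_nonneg (norm_nonneg _) _) hup hinvp0
  have hsub := real_rpow_add_le_add_rpow hA0 hB0' hinvp0 hinvp1
  have hterm1 : (p * CB / cB * ‖x‖) ^ (1 / p)
      ≤ (p * CB / cB) ^ (1 / p) * (1 + ‖x‖) := by
    rw [Real.mul_rpow (by positivity) (norm_nonneg _)]
    have := rpow_le_one_add_self (norm_nonneg x) hinvp0 hinvp1
    have hpos : (0:ℝ) ≤ (p * CB / cB) ^ (1 / p) := Real.rpow_nonneg (by positivity) _
    exact mul_le_mul_of_nonneg_left this hpos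
  have hterm2 : ((CB / cB) ^ p * ‖x‖ ^ p) ^ (1 / p) ≤ CB / cB * (1 + ‖x‖) := by
    rw [Real.mul_rpow (Real.rpow_nonneg (by positivity) _)
        (Real.rpow_nonneg (norm_nonneg _) _),
      ← Real.rpow_mul (by positivity : (0:ℝ) ≤ CB / cB),
      ← Real.rpow_mul (norm_nonneg _), mul_one_div_cancel hp0.ne',
      Real.rpow_one, Real.rpow_one]
    have h7 : ‖x‖ ≤ 1 + ‖x‖ := by linarith [norm_nonneg x]
    exact mul_le_mul_of_nonneg_left h7 (by positivity)
  calc ‖u‖ ≤ (p * CB / cB * ‖x‖ + (CB / cB) ^ p * ‖x‖ ^ p) ^ (1 / p) := hroot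
    _ ≤ (p * CB / cB * ‖x‖) ^ (1 / p) + ((CB / cB) ^ p * ‖x‖ ^ p) ^ (1 / p) := hsub
    _ ≤ (p * CB / cB) ^ (1 / p) * (1 + ‖x‖) + CB / cB * (1 + ‖x‖) := by
        linarith
    _ = ((p * CB / cB) ^ (1 / p) + CB / cB) * (1 + ‖x‖) := by ring
end

section
/- Let V ↪ H be a continuous embedding of a reflexive Banach space into a Hilbert space, and let B̂ : H → [0,∞] be convex lower semicontinuous with B̂(0) = 0 whose subdifferential B = ∂B̂ is single-valued and strongly monotone: (B(x₁)−B(x₂), x₁−x₂)_H ≥ c_B ‖x₁−x₂‖_V^p for x₁, x₂ ∈ D(B), with B(0)=0. Assume that the Yosida resolvents satisfy J_ε(rx) ⇀ rx weakly in V as ε → 0 for every x ∈ V and r ∈ [0,1]. Then B̂ is p-coercive on V: B̂(x) ≥ (c_B/p) ‖x‖_V^p for every x ∈ V. -/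
open scoped RealInnerProductSpace Topology

lemma rpow_sub_rpow_le_aux' {a b p : ℝ} (ha : 0 ≤ a) (hab : a ≤ b) (hp : 1 ≤ p) :
    b ^ p - a ^ p ≤ p * b ^ (p - 1) * (b - a) := by
  rcases eq_or_lt_of_le (ha.trans hab) with hb | hb
  · have hb0 : b = 0 := hb.symm
    have ha0 : a = 0 := le_antisymm (hab.trans_eq hb0) ha
    simp [ha0, hb0, Real.zero_rpow (by linarith : p ≠ 0)]
  · have hs : (-1 : ℝ) ≤ a / b - 1 := by
      have : 0 ≤ a / b := div_nonneg ha hb.le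
      linarith
    have hber := one_add_mul_self_le_rpow_one_add hs hp
    rw [show (1 : ℝ) + (a / b - 1) = a / b by ring] at hber
    have hdiv : (a / b) ^ p = a ^ p / b ^ p := Real.div_rpow ha hb.le p
    have hbp : (0 : ℝ) < b ^ p := Real.rpow_pos_of_pos hb p
    have hkey : (1 + p * (a / b - 1)) * b ^ p ≤ a ^ p := by
      calc (1 + p * (a / b - 1)) * b ^ p ≤ (a / b) ^ p * b ^ p :=
            mul_le_mul_of_nonneg_right hber hbp.le
        _ = a ^ p := by rw [hdiv]; field_simp
    have hb1 : b ^ (p - 1) = b ^ p / b := by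
      rw [Real.rpow_sub hb, Real.rpow_one]
    rw [hb1]
    have h2 : (1 + p * (a / b - 1)) * b ^ p = b ^ p + p * (a * (b ^ p / b)) - p * b ^ p := by
      field_simp; ring
    have h3 : p * (b ^ p / b) * (b - a) = p * b ^ p - p * (a * (b ^ p / b)) := by
      field_simp
    linarith [hkey, h2 ▸ hkey]

lemma cancel_aux' {t q : ℝ} (ht : t ≠ 0) : t * q * (1/t) * (1/t) = q * (1/t) := by
  field_simp

set_option maxHeartbeats 2000000 in
/-- If `B = ∂B̂` is single-valued, strongly monotone with constants
`c_B > 0`, `p ≥ 2`, `B(0)=0`, and the Yosida resolvents satisfy `J_ε(rx) ⇀ rx`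
weakly in `V`, then `B̂` is `p`-coercive on `V`: `B̂(x) ≥ (c_B/p)‖x‖_V^p`. -/
theorem energy_p_coercive
    {V H : Type*} [NormedAddCommGroup V] [NormedSpace ℝ V]
    [NormedAddCommGroup H] [InnerProductSpace ℝ H] [CompleteSpace H]
    (ι : V →L[ℝ] H)                 -- continuous embedding V ↪ H
    (Bhat : H → EReal)
    (hnonneg : ∀ x : H, 0 ≤ Bhat x)
    (hBhat0 : Bhat 0 = 0)
    (hconv : ∀ x y : H, ∀ t : ℝ, 0 ≤ t → t ≤ 1 →
      Bhat (t • x + (1 - t) • y) ≤ (t : EReal) * Bhat x + (((1 - t) : ℝ) : EReal) * Bhat y)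
    (hlsc : LowerSemicontinuous Bhat)
    (D : Set V) (B : V → H)
    (h0D : (0 : V) ∈ D) (hB0 : B 0 = 0)
    (cB p : ℝ) (hcB : 0 < cB) (hp : 2 ≤ p)
    (hmono : ∀ x₁ ∈ D, ∀ x₂ ∈ D, cB * ‖x₁ - x₂‖ ^ p ≤ ⟪B x₁ - B x₂, ι x₁ - ι x₂⟫)
    -- B is the (single-valued) subdifferential of B̂ on D:
    (hsub : ∀ x ∈ D, ∀ z : H, Bhat (ι x) + ((⟪B x, z - ι x⟫ : ℝ) : EReal) ≤ Bhat z)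
    (hfin : ∀ x ∈ D, Bhat (ι x) ≠ ⊤)
    -- Yosida resolvents:
    (J : ℝ → H → V)
    (hJD : ∀ ε > (0:ℝ), ∀ h : H, J ε h ∈ D)
    (hJ : ∀ ε > (0:ℝ), ∀ h : H, ι (J ε h) + ε • B (J ε h) = h)
    -- weak convergence J_ε(rx) ⇀ rx in V as ε → 0:
    (hweak : ∀ x : V, ∀ r ∈ Set.Icc (0:ℝ) 1, ∀ f : StrongDual ℝ V,
      Filter.Tendsto (fun ε : ℝ => f (J ε (r • ι x))) (𝓝[>] 0) (𝓝 (f (r • x)))) :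
    ∀ x : V, ((cB / p * ‖x‖ ^ p : ℝ) : EReal) ≤ Bhat (ι x) := by
  intro x
  by_cases htop : Bhat (ι x) = ⊤
  · rw [htop]; exact le_top
  by_cases hx0 : x = 0
  · subst hx0
    rw [map_zero, hBhat0, norm_zero, Real.zero_rpow (by positivity : p ≠ 0), mul_zero]
    exact le_of_eq EReal.coe_zero
  have hp1 : (1:ℝ) ≤ p := by linarith
  have hp0 : (0:ℝ) < p := by linarith
  have hxn : 0 < ‖x‖ := norm_pos_iff.mpr hx0
  have hbot : ∀ z : H, Bhat z ≠ ⊥ := fun z => (EReal.bot_lt_zero.trans_le (hnonneg z)).ne'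
  set M : ℝ := (Bhat (ι x)).toReal with hMdef
  have hM : Bhat (ι x) = (M : EReal) := (EReal.coe_toReal htop (hbot _)).symm
  set G : ℝ → ℝ := fun t => (Bhat (t • ι x)).toReal with hGdef
  have hGco : ∀ t : ℝ, 0 ≤ t → t ≤ 1 → Bhat (t • ι x) = ((G t : ℝ) : EReal) := by
    intro t ht0 ht1
    have h1 := hconv (ι x) 0 t ht0 ht1
    rw [smul_zero, add_zero, hBhat0, mul_zero, add_zero, hM] at h1
    have hne : Bhat (t • ι x) ≠ ⊤ := by
      intro h; rw [h] at h1
      exact absurd h1 (by rw [← EReal.coe_mul]; exact (EReal.coe_lt_top _).not_ge)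
    exact (EReal.coe_toReal hne (hbot _)).symm
  have hGnn : ∀ t : ℝ, 0 ≤ t → t ≤ 1 → 0 ≤ G t := by
    intro t ht0 ht1
    have := hnonneg (t • ι x)
    rw [hGco t ht0 ht1, ← EReal.coe_zero, EReal.coe_le_coe_iff] at this
    exact this
  have hG1 : G 1 = M := by
    simp only [hGdef, one_smul, hMdef]
  set c : ℝ := cB * ‖x‖ ^ p with hc
  have hcnn : 0 < c := by
    have : 0 < ‖x‖ ^ p := Real.rpow_pos_of_pos hxn p
    positivity
  -- key differential inequality
  have key : ∀ r s : ℝ, 0 < r → r ≤ s → s ≤ 1 →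
      G r + c * ((s - r) * r ^ (p - 1)) ≤ G s := by
    intro r s hr hrs hs1
    have hr1 : r ≤ 1 := hrs.trans hs1
    have hs0 : 0 ≤ s := hr.le.trans hrs
    set y : ℝ → V := fun ε => J ε (r • ι x) with hy
    set b : ℝ → ℝ := fun ε => (Bhat (ι (y ε))).toReal with hb
    have hbco : ∀ ε : ℝ, 0 < ε → Bhat (ι (y ε)) = ((b ε : ℝ) : EReal) := fun ε hε =>
      (EReal.coe_toReal (hfin _ (hJD ε hε _)) (hbot _)).symm
    have hbnn : ∀ ε : ℝ, 0 < ε → 0 ≤ b ε := by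
      intro ε hε
      have := hnonneg (ι (y ε))
      rw [hbco ε hε, ← EReal.coe_zero, EReal.coe_le_coe_iff] at this
      exact this
    have hιy : ∀ ε : ℝ, 0 < ε → ι (y ε) = r • ι x - ε • B (y ε) := by
      intro ε hε
      have h1 := hJ ε hε (r • ι x)
      rw [← h1]; abel
    have hsubR : ∀ ε : ℝ, 0 < ε → ∀ z : H, ∀ cz : ℝ, Bhat z = (cz : EReal) →
        b ε + ⟪B (y ε), z - ι (y ε)⟫ ≤ cz := by
      intro ε hε z cz hz
      have h1 := hsub (y ε) (hJD ε hε _) z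
      rw [hbco ε hε, hz, ← EReal.coe_add, EReal.coe_le_coe_iff] at h1
      exact h1
    have hinner_s : ∀ ε : ℝ, 0 < ε →
        ⟪B (y ε), s • ι x - ι (y ε)⟫ = (s - r) * ⟪B (y ε), ι x⟫ + ε * ‖B (y ε)‖ ^ 2 := by
      intro ε hε
      rw [hιy ε hε, show s • ι x - (r • ι x - ε • B (y ε))
          = (s - r) • ι x + ε • B (y ε) by rw [sub_smul]; abel]
      rw [inner_add_right, real_inner_smul_right, real_inner_smul_right,
        real_inner_self_eq_norm_sq]
    have hmono0 : ∀ ε : ℝ, 0 < ε →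
        cB * ‖y ε‖ ^ p ≤ r * ⟪B (y ε), ι x⟫ - ε * ‖B (y ε)‖ ^ 2 := by
      intro ε hε
      have h1 := hmono (y ε) (hJD ε hε _) 0 h0D
      simp only [hB0, map_zero, sub_zero] at h1
      have h2 : ⟪B (y ε), ι (y ε)⟫ = r * ⟪B (y ε), ι x⟫ - ε * ‖B (y ε)‖ ^ 2 := by
        rw [hιy ε hε, inner_sub_right, real_inner_smul_right, real_inner_smul_right,
          real_inner_self_eq_norm_sq]
      rw [h2] at h1
      exact h1
    have hBx : ∀ ε : ℝ, 0 < ε → cB / r * ‖y ε‖ ^ p ≤ ⟪B (y ε), ι x⟫ := by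
      intro ε hε
      have h1 := hmono0 ε hε
      have h2 : 0 ≤ ε * ‖B (y ε)‖ ^ 2 := by positivity
      rw [div_mul_eq_mul_div, div_le_iff₀ hr]
      nlinarith
    have ineq1 : ∀ ε : ℝ, 0 < ε →
        b ε + (s - r) * (cB / r) * ‖y ε‖ ^ p ≤ G s := by
      intro ε hε
      have h1 := hsubR ε hε (s • ι x) (G s) (hGco s hs0 hs1)
      have h2 : 0 ≤ ε * ‖B (y ε)‖ ^ 2 := by positivity
      have h3 := mul_le_mul_of_nonneg_left (hBx ε hε) (sub_nonneg.mpr hrs)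
      rw [hinner_s ε hε] at h1
      nlinarith
    have ineq2 : ∀ ε : ℝ, 0 < ε → ε * ‖B (y ε)‖ ^ 2 ≤ G r := by
      intro ε hε
      have h1 := hsubR ε hε (r • ι x) (G r) (hGco r hr.le hr1)
      have h2 : ⟪B (y ε), r • ι x - ι (y ε)⟫ = ε * ‖B (y ε)‖ ^ 2 := by
        rw [hιy ε hε, show r • ι x - (r • ι x - ε • B (y ε)) = ε • B (y ε) by abel,
          real_inner_smul_right, real_inner_self_eq_norm_sq]
      rw [h2] at h1
      linarith [hbnn ε hε]
    have hGrnn : 0 ≤ G r := hGnn r hr.le hr1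
    have hdist : ∀ ε : ℝ, 0 < ε → ‖ι (y ε) - r • ι x‖ ^ 2 ≤ ε * G r := by
      intro ε hε
      have h1 : ι (y ε) - r • ι x = -(ε • B (y ε)) := by rw [hιy ε hε]; abel
      rw [h1, norm_neg, norm_smul, Real.norm_eq_abs, abs_of_pos hε]
      have h2 := ineq2 ε hε
      nlinarith [mul_le_mul_of_nonneg_left h2 hε.le]
    have htendH : Filter.Tendsto (fun ε => ι (y ε)) (𝓝[>] (0:ℝ)) (𝓝 (r • ι x)) := by
      rw [tendsto_iff_norm_sub_tendsto_zero]
      have hg : Filter.Tendsto (fun ε : ℝ => Real.sqrt (ε * G r)) (𝓝[>] (0:ℝ)) (𝓝 0) := by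
        have h1 : Filter.Tendsto (fun ε : ℝ => ε * G r) (𝓝[>] (0:ℝ)) (𝓝 0) := by
          have h2 : Filter.Tendsto (fun ε : ℝ => ε * G r) (𝓝 (0:ℝ)) (𝓝 0) := by
            have h3 := (continuous_id.mul continuous_const :
              Continuous fun ε : ℝ => ε * G r).tendsto 0
            simpa [Pi.mul_def] using h3
          exact h2.mono_left nhdsWithin_le_nhds
        have h4 := (Real.continuous_sqrt.tendsto 0).comp h1
        simpa only [Function.comp_def, Real.sqrt_zero] using h4
      apply squeeze_zero' (Filter.Eventually.of_forall fun ε => norm_nonneg _) _ hg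
      filter_upwards [eventually_mem_nhdsWithin] with ε (hε : ε ∈ Set.Ioi (0:ℝ))
      rw [Real.le_sqrt (norm_nonneg _) (mul_nonneg (le_of_lt hε) hGrnn)]
      exact hdist ε hε
    have main : ∀ δ : ℝ, 0 < δ →
        G r + c * ((s - r) * r ^ (p - 1))
          ≤ G s + δ * (1 + (s - r) * (cB / r)) := by
      intro δ hδ
      have hev1 : ∀ᶠ ε in 𝓝[>] (0:ℝ), G r - δ < b ε := by
        have hlt : ((G r - δ : ℝ) : EReal) < Bhat (r • ι x) := by
          rw [hGco r hr.le hr1, EReal.coe_lt_coe_iff]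
          linarith
        have h1 := hlsc (r • ι x) _ hlt
        filter_upwards [htendH.eventually h1, eventually_mem_nhdsWithin] with ε h2
          (hε : ε ∈ Set.Ioi (0:ℝ))
        rw [hbco ε hε, gt_iff_lt, EReal.coe_lt_coe_iff] at h2
        exact h2
      have hev2 : ∀ᶠ ε in 𝓝[>] (0:ℝ), (r * ‖x‖) ^ p - δ < ‖y ε‖ ^ p := by
        obtain ⟨f, hf1, hfx⟩ := exists_dual_vector ℝ (r • x) (norm_ne_zero_iff.mpr (smul_ne_zero hr.ne' hx0))
        have hws := hweak x r ⟨hr.le, hr1⟩ f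
        have hval : f (r • x) = r * ‖x‖ := by
          rw [hfx, norm_smul, Real.norm_eq_abs, abs_of_pos hr]
          norm_num [RCLike.ofReal_real_eq_id]
        rw [hval] at hws
        have hpos : 0 < r * ‖x‖ := by positivity
        have hcont : ContinuousAt (fun t : ℝ => t ^ p) (r * ‖x‖) :=
          Real.continuousAt_rpow_const _ _ (Or.inl hpos.ne')
        have h2 : Filter.Tendsto (fun ε => (f (y ε)) ^ p) (𝓝[>] (0:ℝ))
            (𝓝 ((r * ‖x‖) ^ p)) := Filter.Tendsto.comp hcont hws
        filter_upwards [h2.eventually (eventually_gt_nhds (by linarith :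
            (r * ‖x‖) ^ p - δ < (r * ‖x‖) ^ p)),
          hws.eventually (eventually_gt_nhds hpos)] with ε h3 h4
        refine h3.trans_le ?_
        have h5 : f (y ε) ≤ ‖y ε‖ := by
          calc f (y ε) ≤ ‖f (y ε)‖ := le_abs_self _
            _ ≤ ‖f‖ * ‖y ε‖ := f.le_opNorm _
            _ = ‖y ε‖ := by rw [hf1, one_mul]
        exact Real.rpow_le_rpow h4.le h5 hp0.le
      have hev3 : ∀ᶠ ε in 𝓝[>] (0:ℝ), b ε + (s - r) * (cB / r) * ‖y ε‖ ^ p ≤ G s := by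
        filter_upwards [eventually_mem_nhdsWithin] with ε (hε : ε ∈ Set.Ioi (0:ℝ))
        exact ineq1 ε hε
      obtain ⟨ε, h1, h2, h3⟩ := (hev1.and (hev2.and hev3)).exists
      have hC : 0 ≤ (s - r) * (cB / r) :=
        mul_nonneg (sub_nonneg.mpr hrs) (by positivity)
      have h4 : (s - r) * (cB / r) * ((r * ‖x‖) ^ p - δ) ≤ (s - r) * (cB / r) * ‖y ε‖ ^ p :=
        mul_le_mul_of_nonneg_left h2.le hC
      have h5 : c * ((s - r) * r ^ (p - 1)) = (s - r) * (cB / r) * (r * ‖x‖) ^ p := by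
        rw [hc, Real.mul_rpow hr.le (norm_nonneg x), Real.rpow_sub hr, Real.rpow_one]
        field_simp
      rw [h5]
      nlinarith
    by_contra hcon
    push_neg at hcon
    set A := G r + c * ((s - r) * r ^ (p - 1)) with hA
    set C := 1 + (s - r) * (cB / r) with hC
    have hCpos : 0 < C := by
      have h1 : 0 ≤ (s - r) * (cB / r) := mul_nonneg (sub_nonneg.mpr hrs) (by positivity)
      rw [hC]; linarith
    have hδ : 0 < (A - G s) / (2 * C) := div_pos (by linarith) (by linarith)
    have h7 := main _ hδ
    have h6 : (A - G s) / (2 * C) * C = (A - G s) / 2 := by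
      field_simp [hCpos.ne']
    rw [h6] at h7
    linarith
  -- telescoping
  have tele : ∀ n : ℕ, 0 < n → ∀ k : ℕ, k ≤ n →
      c * (((k : ℝ) / n) ^ p / p - k * p * (1/(n:ℝ)) * (1/(n:ℝ))) ≤ G ((k : ℝ) / n) := by
    intro n hn
    have hnR : (0:ℝ) < n := Nat.cast_pos.mpr hn
    intro k
    induction k with
    | zero =>
      intro _
      have h0 := hGnn 0 le_rfl zero_le_one
      simp only [Nat.cast_zero, zero_div]
      rw [Real.zero_rpow hp0.ne']
      simpa using h0
    | succ k ih =>
      intro hk1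
      have hkn : k ≤ n := Nat.le_of_succ_le hk1
      have hknR : (k : ℝ) ≤ n := Nat.cast_le.mpr hkn
      have hk1R : (k : ℝ) + 1 ≤ (n : ℝ) := by
        have h1 : ((k + 1 : ℕ) : ℝ) ≤ n := Nat.cast_le.mpr hk1
        push_cast at h1; linarith
      have ihk := ih hkn
      push_cast
      set a : ℝ := (k : ℝ) / n with ha
      set bb : ℝ := ((k : ℝ) + 1) / n with hbb
      have ha0 : 0 ≤ a := by rw [ha]; positivity
      have hab : a ≤ bb := by
        rw [ha, hbb, div_le_div_iff_of_pos_right]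
        · linarith
        · exact hnR
      have hb1 : bb ≤ 1 := (div_le_one hnR).mpr hk1R
      have hba : bb - a = 1 / n := by rw [ha, hbb]; field_simp; ring
      have hninv : (0:ℝ) < 1 / n := by positivity
      have s1 : bb ^ p - a ^ p ≤ p * bb ^ (p - 1) * (1 / n) := by
        have h1 := rpow_sub_rpow_le_aux' ha0 hab hp1
        rwa [hba] at h1
      have s2 : bb ^ (p - 1) - a ^ (p - 1) ≤ (p - 1) * bb ^ (p - 1 - 1) * (1 / n) := by
        have h1 := rpow_sub_rpow_le_aux' ha0 hab (by linarith : (1:ℝ) ≤ p - 1)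
        rwa [hba] at h1
      have s3 : bb ^ (p - 1 - 1) ≤ 1 :=
        Real.rpow_le_one (ha0.trans hab) hb1 (by linarith)
      have s4 : bb ^ (p - 1) ≤ a ^ (p - 1) + (p - 1) * (1 / n) := by
        have h1 := mul_le_mul_of_nonneg_left s3
          (mul_nonneg (by linarith : (0:ℝ) ≤ p - 1) hninv.le)
        nlinarith [s2]
      have s5 : bb ^ p / p - a ^ p / p ≤ 1 / n * a ^ (p - 1) + p * (1/(n:ℝ)) * (1/(n:ℝ)) := by
        have h6 : bb ^ p - a ^ p
            ≤ p * (1 / n * a ^ (p - 1)) + p * (p * (1/(n:ℝ)) * (1/(n:ℝ))) := by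
          have h7 := mul_le_mul_of_nonneg_left s4
            (by positivity : (0:ℝ) ≤ p * (1 / (n:ℝ)))
          have h8 : (0:ℝ) ≤ p * (1/(n:ℝ)) * (1/(n:ℝ)) := by positivity
          nlinarith [s1]
        have h7 : bb ^ p / p - a ^ p / p = (bb ^ p - a ^ p) / p := (sub_div _ _ _).symm
        rw [h7, div_le_iff₀ hp0]
        nlinarith [h6]
      rcases Nat.eq_zero_or_pos k with hk0 | hkpos
      · subst hk0
        simp only [Nat.cast_zero, zero_add]
        have hbbpos : 0 < bb := by rw [hbb]; positivity
        have h10 : bb ^ p ≤ bb ^ (2:ℝ) :=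
          Real.rpow_le_rpow_of_exponent_ge hbbpos hb1 hp
        have h11 : bb ^ (2:ℝ) = bb * bb := by
          rw [show (2:ℝ) = ((2:ℕ):ℝ) by norm_num, Real.rpow_natCast]; ring
        have h12 : bb * bb = 1/(n:ℝ) * (1/(n:ℝ)) := by
          rw [hbb]; push_cast; field_simp; norm_num
        have h13 : bb ^ p / p ≤ 1/(n:ℝ) * (1/(n:ℝ)) := by
          have h14 : bb ^ p / p ≤ bb ^ p :=
            div_le_self (Real.rpow_nonneg hbbpos.le _) hp1
          calc bb ^ p / p ≤ bb ^ p := h14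
            _ ≤ 1/(n:ℝ) * (1/(n:ℝ)) := by rw [← h12, ← h11]; exact h10
        have h14 : (1:ℝ)/(n:ℝ) * (1/(n:ℝ)) ≤ p * (1/(n:ℝ)) * (1/(n:ℝ)) := by
          nlinarith [hninv, hp1]
        have h15 : 0 ≤ G bb := hGnn bb (by linarith) hb1
        nlinarith [mul_nonneg hcnn.le
          (by linarith : (0:ℝ) ≤ p * (1/(n:ℝ)) * (1/(n:ℝ)) - bb ^ p / p)]
      · have hapos : 0 < a := by
          rw [ha]; exact div_pos (by exact_mod_cast hkpos) hnR
        have hkey := key a bb hapos hab hb1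
        rw [hba] at hkey
        have hmul := mul_le_mul_of_nonneg_left s5 hcnn.le
        linarith [ihk, hkey, hmul]
  -- conclusion
  have final : ∀ n : ℕ, 0 < n → c * (1 / p - p * (1/(n:ℝ))) ≤ M := by
    intro n hn
    have hnR : (0:ℝ) < n := Nat.cast_pos.mpr hn
    have h1 := tele n hn n le_rfl
    rw [div_self hnR.ne', Real.one_rpow, hG1, cancel_aux' hnR.ne'] at h1
    linarith [h1]
  rw [hM, EReal.coe_le_coe_iff]
  have heq : cB / p * ‖x‖ ^ p = c * (1 / p) := by rw [hc]; ring
  rw [heq]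
  by_contra hcon
  push_neg at hcon
  set η : ℝ := c * (1 / p) - M with hη
  have hηpos : 0 < η := by rw [hη]; linarith
  obtain ⟨n, hn⟩ := exists_nat_gt (c * p / η)
  have hnposR : (0:ℝ) < n :=
    lt_trans (div_pos (mul_pos hcnn hp0) hηpos) hn
  have h8 := final n (Nat.cast_pos.mp hnposR)
  have h9 : c * p * (1/(n:ℝ)) < η := by
    rw [mul_one_div, div_lt_iff₀ hnposR]
    have h10 := (div_lt_iff₀ hηpos).mp hn
    linarith
  have h10 : c * (1 / p - p * (1/(n:ℝ))) = c * (1 / p) - c * p * (1/(n:ℝ)) := by ring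
  rw [h10] at h8
  linarith
end
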